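/- arXiv:1502.02173 — 8 statements merged into one kernel-verified Lean document; each statement's English description precedes it below -/
import Mathlib

section
/- For all real numbers x, y with 0 ≤ y ≤ x ≤ 1, one has x² + y² + 2x ≥ √2·(x^{4/3} + y^{4/3})^{3/2}. -/
/-! The power-mean inequality `(a + b)^{3/2} ≤ √2 (a^{3/2} + b^{3/2})` applied to
`a = x^{4/3}`, `b = y^{4/3}` bounds the right-hand side by `2 (x² + y²)`, and
`x² + y² ≤ 2x` because `y ≤ x ≤ 1`. -/

namespace Real

theorem rpow_add_le_two_rpow_sub_one_mul {a b p : ℝ} (ha : 0 ≤ a) (hb : 0 ≤ b) (hp : 1 ≤ p) :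
    (a + b) ^ p ≤ 2 ^ (p - 1) * (a ^ p + b ^ p) := by
  lift a to NNReal using ha
  lift b to NNReal using hb
  exact_mod_cast NNReal.rpow_add_le_mul_rpow_add_rpow a b hp

theorem rpow_four_thirds_rpow_three_halves {x : ℝ} (hx : 0 ≤ x) :
    (x ^ ((4:ℝ)/3)) ^ ((3:ℝ)/2) = x ^ 2 := by
  rw [← rpow_mul hx]
  norm_num

end Real

theorem stmt0 (x y : ℝ) (hy : 0 ≤ y) (hyx : y ≤ x) (hx : x ≤ 1) :
    Real.sqrt 2 * (x ^ ((4:ℝ)/3) + y ^ ((4:ℝ)/3)) ^ ((3:ℝ)/2) ≤ x^2 + y^2 + 2*x := by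
  have hx0 : 0 ≤ x := hy.trans hyx
  have hsqrt : Real.sqrt 2 * 2 ^ ((3:ℝ)/2 - 1) = 2 := by
    rw [Real.sqrt_eq_rpow, ← Real.rpow_add two_pos]
    norm_num
  calc Real.sqrt 2 * (x ^ ((4:ℝ)/3) + y ^ ((4:ℝ)/3)) ^ ((3:ℝ)/2)
      ≤ Real.sqrt 2 * (2 ^ ((3:ℝ)/2 - 1) *
          ((x ^ ((4:ℝ)/3)) ^ ((3:ℝ)/2) + (y ^ ((4:ℝ)/3)) ^ ((3:ℝ)/2))) := by
        gcongr
        exact Real.rpow_add_le_two_rpow_sub_one_mul (by positivity) (by positivity) (by norm_num)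
    _ = 2 * (x ^ 2 + y ^ 2) := by
        rw [Real.rpow_four_thirds_rpow_three_halves hx0,
          Real.rpow_four_thirds_rpow_three_halves hy, ← mul_assoc, hsqrt]
    _ ≤ x ^ 2 + y ^ 2 + 2 * x := by nlinarith
end

section
/- For every complex polynomial P(z,w) = az² + bzw + cw² with a, b, c ∈ ℂ, there exist real numbers a', b', c' such that sup_{|z|,|w|≤1} |a'z² + b'zw + c'w²| ≤ sup_{|z|,|w|≤1} |az² + bzw + cw²| and (|a'|^{4/3} + |b'|^{4/3} + |c'|^{4/3})^{3/4} = (|a|^{4/3} + |b|^{4/3} + |c|^{4/3})^{3/4}. -/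
/-!
Write `A = ‖a‖`, `C = ‖c‖`, `r = ‖b‖`. Substituting `z = u ξ`, `w = v ξ̄` with `u ^ 2 * a = A`,
`v ^ 2 * c = C` and `‖ξ‖ = 1` shows `‖A ζ + β + C ζ̄‖ ≤ supBidisk a b c` on the unit circle for some
`‖β‖ = r`; with `ζ = x + i y` this says `((A + C) x + Re β)² + ((A - C) y + Im β)²` is at most
`supBidisk a b c ^ 2`. If `A + C + r ≤ supBidisk a b c`, take `(A, r, C)`. Otherwise take
`(A, r, -C)`: on the torus `‖A z² + r z w - C w²‖ = ‖(A - C) x + r + i (A + C) y‖` with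
`x + i y = z w̄`, and testing the circle inequality at a suitable point bounds this by
`supBidisk a b c`.
-/

/-- Supremum of `|a z² + b z w + c w²|` over the closed unit bidisk. -/
noncomputable def supBidisk (a b c : ℂ) : ℝ :=
  sSup {r : ℝ | ∃ z w : ℂ, ‖z‖ ≤ 1 ∧ ‖w‖ ≤ 1 ∧
    r = ‖a * z^2 + b * z * w + c * w^2‖}

open ComplexConjugate

lemma norm_quadForm_le (a b c : ℂ) {z w : ℂ} (hz : ‖z‖ ≤ 1) (hw : ‖w‖ ≤ 1) :
    ‖a * z^2 + b * z * w + c * w^2‖ ≤ ‖a‖ + ‖b‖ + ‖c‖ :=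
  calc ‖a * z^2 + b * z * w + c * w^2‖
      ≤ ‖a * z^2‖ + ‖b * z * w‖ + ‖c * w^2‖ := norm_add₃_le
    _ = ‖a‖ * ‖z‖^2 + ‖b‖ * ‖z‖ * ‖w‖ + ‖c‖ * ‖w‖^2 := by simp only [norm_mul, norm_pow]
    _ ≤ ‖a‖ * 1^2 + ‖b‖ * 1 * 1 + ‖c‖ * 1^2 := by gcongr
    _ = ‖a‖ + ‖b‖ + ‖c‖ := by ring

lemma norm_quadForm_le_supBidisk (a b c : ℂ) {z w : ℂ} (hz : ‖z‖ ≤ 1) (hw : ‖w‖ ≤ 1) :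
    ‖a * z^2 + b * z * w + c * w^2‖ ≤ supBidisk a b c :=
  le_csSup ⟨‖a‖ + ‖b‖ + ‖c‖, by rintro r ⟨z, w, hz, hw, rfl⟩; exact norm_quadForm_le a b c hz hw⟩
    ⟨z, w, hz, hw, rfl⟩

lemma supBidisk_nonneg (a b c : ℂ) : 0 ≤ supBidisk a b c :=
  (norm_nonneg _).trans (norm_quadForm_le_supBidisk a b c (z := 0) (w := 0) (by simp) (by simp))

lemma supBidisk_le {a b c : ℂ} {K : ℝ}
    (h : ∀ z w : ℂ, ‖z‖ ≤ 1 → ‖w‖ ≤ 1 → ‖a * z^2 + b * z * w + c * w^2‖ ≤ K) :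
    supBidisk a b c ≤ K :=
  csSup_le ⟨_, 0, 0, by simp, by simp, rfl⟩ fun _ ⟨z, w, hz, hw, hr⟩ => hr ▸ h z w hz hw

lemma supBidisk_le_norm_add_norm_add_norm (a b c : ℂ) : supBidisk a b c ≤ ‖a‖ + ‖b‖ + ‖c‖ :=
  supBidisk_le fun _ _ => norm_quadForm_le a b c

lemma norm_le_of_forall_norm_eq_one {F : Type*} [NormedAddCommGroup F] [NormedSpace ℂ F]
    {f : ℂ → F} (hf : Differentiable ℂ f) {K : ℝ} (h : ∀ z : ℂ, ‖z‖ = 1 → ‖f z‖ ≤ K)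
    {z : ℂ} (hz : ‖z‖ ≤ 1) : ‖f z‖ ≤ K := by
  refine Complex.norm_le_of_forall_mem_frontier_norm_le (U := Metric.ball 0 1)
    Metric.isBounded_ball hf.diffContOnCl (fun z hz => h z ?_) ?_
  · rwa [frontier_ball (0 : ℂ) one_ne_zero, mem_sphere_zero_iff_norm] at hz
  · rwa [closure_ball (0 : ℂ) one_ne_zero, mem_closedBall_zero_iff]

lemma supBidisk_le_of_forall_norm_eq_one {a b c : ℂ} {K : ℝ}
    (h : ∀ z w : ℂ, ‖z‖ = 1 → ‖w‖ = 1 → ‖a * z^2 + b * z * w + c * w^2‖ ≤ K) :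
    supBidisk a b c ≤ K :=
  supBidisk_le fun z w hz hw =>
    norm_le_of_forall_norm_eq_one (by fun_prop)
      (fun z hz => norm_le_of_forall_norm_eq_one (by fun_prop) (h z · hz) hw) hz

lemma mul_conj_of_norm_eq_one {z : ℂ} (hz : ‖z‖ = 1) : z * conj z = 1 := by
  simp [Complex.mul_conj', hz]

lemma exists_sq_eq_of_norm_eq_one {ζ : ℂ} (hζ : ‖ζ‖ = 1) : ∃ ξ : ℂ, ‖ξ‖ = 1 ∧ ξ ^ 2 = ζ := by
  obtain ⟨ξ, hξ⟩ := IsAlgClosed.exists_pow_nat_eq ζ two_pos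
  refine ⟨ξ, ?_, hξ⟩
  rwa [← pow_eq_one_iff_of_nonneg (norm_nonneg ξ) two_ne_zero, ← norm_pow, hξ]

lemma exists_norm_eq_one_sq_mul_eq_norm (a : ℂ) : ∃ u : ℂ, ‖u‖ = 1 ∧ u ^ 2 * a = ‖a‖ := by
  rcases eq_or_ne a 0 with rfl | ha
  · exact ⟨1, by simp, by simp⟩
  obtain ⟨u, hu, hua⟩ := exists_sq_eq_of_norm_eq_one (ζ := ‖a‖ / a) (by
    rw [norm_div, Complex.norm_of_nonneg (norm_nonneg a), div_self (norm_ne_zero_iff.mpr ha)])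
  exact ⟨u, hu, by rw [hua, div_mul_cancel₀ _ ha]⟩

lemma quadForm_eq_of_norm_eq_one (a b c : ℂ) {z w : ℂ} (hz : ‖z‖ = 1) (hw : ‖w‖ = 1) :
    a * z^2 + b * z * w + c * w^2 = z * w * (a * (z * conj w) + b + c * conj (z * conj w)) := by
  rw [map_mul, Complex.conj_conj]
  linear_combination (-a * z ^ 2) * mul_conj_of_norm_eq_one hw
    + (-c * w ^ 2) * mul_conj_of_norm_eq_one hz

lemma norm_eq_one_iff_re_sq_add_im_sq {ζ : ℂ} : ‖ζ‖ = 1 ↔ ζ.re ^ 2 + ζ.im ^ 2 = 1 := by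
  rw [← pow_eq_one_iff_of_nonneg (norm_nonneg ζ) two_ne_zero, Complex.sq_norm,
    Complex.normSq_apply, sq, sq]

lemma norm_sq_ofReal_mul_add_add_ofReal_mul_conj (A C : ℝ) (ζ β : ℂ) :
    ‖(A : ℂ) * ζ + β + (C : ℂ) * conj ζ‖ ^ 2
      = ((A + C) * ζ.re + β.re) ^ 2 + ((A - C) * ζ.im + β.im) ^ 2 := by
  rw [Complex.sq_norm, Complex.normSq_apply]
  simp only [Complex.add_re, Complex.add_im, Complex.mul_re, Complex.mul_im,
    Complex.conj_re, Complex.conj_im, Complex.ofReal_re, Complex.ofReal_im]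
  ring

lemma exists_norm_eq_forall_norm_le_supBidisk (a b c : ℂ) :
    ∃ β : ℂ, ‖β‖ = ‖b‖ ∧ ∀ ζ : ℂ, ‖ζ‖ = 1 →
      ‖(‖a‖ : ℂ) * ζ + β + (‖c‖ : ℂ) * conj ζ‖ ≤ supBidisk a b c := by
  obtain ⟨u, hu, hua⟩ := exists_norm_eq_one_sq_mul_eq_norm a
  obtain ⟨v, hv, hvc⟩ := exists_norm_eq_one_sq_mul_eq_norm c
  refine ⟨u * v * b, by simp [hu, hv], fun ζ hζ => ?_⟩
  obtain ⟨ξ, hξ, rfl⟩ := exists_sq_eq_of_norm_eq_one hζ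
  have hform : a * (u * ξ) ^ 2 + b * (u * ξ) * (v * conj ξ) + c * (v * conj ξ) ^ 2
      = ‖a‖ * ξ ^ 2 + u * v * b + ‖c‖ * conj (ξ ^ 2) := by
    rw [← hua, ← hvc, map_pow]
    linear_combination (u * v * b) * mul_conj_of_norm_eq_one hξ
  rw [← hform]
  exact norm_quadForm_le_supBidisk a b c (by simp [hu, hξ]) (by simp [hv, hξ])

lemma sq_add_sq_le_abs_of_forall {D B p q K : ℝ}
    (H : ∀ x y : ℝ, x ^ 2 + y ^ 2 = 1 → (D * x + p) ^ 2 + (B * y + q) ^ 2 ≤ K)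
    {x y : ℝ} (hxy : x ^ 2 + y ^ 2 = 1) : (D * x + |p|) ^ 2 + (B * y + q) ^ 2 ≤ K := by
  rcases abs_choice p with h | h <;> rw [h]
  · exact H x y hxy
  · exact (le_of_eq (by ring)).trans (H (-x) y (by rwa [neg_sq]))

lemma sq_add_sq_le_of_forall_sq_add_sq_le {D B p q r K : ℝ} (hD : 0 ≤ D) (hp : 0 ≤ p)
    (hr : 0 ≤ r) (hpqr : p ^ 2 + q ^ 2 = r ^ 2)
    (H : ∀ x y : ℝ, x ^ 2 + y ^ 2 = 1 → (D * x + p) ^ 2 + (B * y + q) ^ 2 ≤ K)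
    (hK : K < (D + r) ^ 2) {x y : ℝ} (hxy : x ^ 2 + y ^ 2 = 1) :
    (B * x + r) ^ 2 + D ^ 2 * y ^ 2 ≤ K := by
  have hq : q ≠ 0 := by
    rintro rfl
    obtain rfl : p = r := (pow_left_inj₀ hp hr two_ne_zero).1 (by linarith)
    have := H 1 0 (by norm_num)
    norm_num at this
    linarith
  have hr0 : 0 < r := by nlinarith [sq_pos_of_ne_zero hq]
  -- Test `H` at `(X / r, q * x / r)`: multiplied by `r ^ 2` it gives
  -- `p ^ 2 * (D + r) ^ 2 + q ^ 2 * ((B * x + r) ^ 2 + D ^ 2 * y ^ 2) ≤ (p ^ 2 + q ^ 2) * K`.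
  set X := √(p ^ 2 + q ^ 2 * y ^ 2)
  have hX : X ^ 2 = p ^ 2 + q ^ 2 * y ^ 2 := Real.sq_sqrt (by positivity)
  have hpX : p ≤ X := Real.le_sqrt_of_sq_le (by nlinarith)
  have hcirc : (X / r) ^ 2 + (q * x / r) ^ 2 = 1 := by
    field_simp
    linear_combination hX + q ^ 2 * hxy + hpqr
  have hscaled : (D * X + p * r) ^ 2 + q ^ 2 * (B * x + r) ^ 2 ≤ r ^ 2 * K := by
    rw [← div_le_iff₀' (by positivity)]
    refine (le_of_eq ?_).trans (H _ _ hcirc)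
    field_simp
  have hexpand : p ^ 2 * (D + r) ^ 2 + q ^ 2 * (D ^ 2 * y ^ 2) ≤ (D * X + p * r) ^ 2 := by
    nlinarith [mul_le_mul_of_nonneg_left hpX (by positivity : 0 ≤ D * p * r)]
  have hq2 : q ^ 2 * ((B * x + r) ^ 2 + D ^ 2 * y ^ 2) ≤ q ^ 2 * K := by
    nlinarith [mul_le_mul_of_nonneg_left hK.le (sq_nonneg p)]
  exact le_of_mul_le_mul_left hq2 (by positivity)

lemma supBidisk_ofReal_neg_le {A r C K : ℝ} (hK : 0 ≤ K)
    (H : ∀ x y : ℝ, x ^ 2 + y ^ 2 = 1 → ((A - C) * x + r) ^ 2 + (A + C) ^ 2 * y ^ 2 ≤ K ^ 2) :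
    supBidisk A r (-C : ℝ) ≤ K :=
  supBidisk_le_of_forall_norm_eq_one fun z w hz hw => by
    have hη := norm_eq_one_iff_re_sq_add_im_sq.1 (show ‖z * conj w‖ = 1 by simp [hz, hw])
    rw [quadForm_eq_of_norm_eq_one _ _ _ hz hw, norm_mul, norm_mul, hz, hw, one_mul, one_mul,
      ← pow_le_pow_iff_left₀ (norm_nonneg _) hK two_ne_zero,
      norm_sq_ofReal_mul_add_add_ofReal_mul_conj]
    refine (le_of_eq ?_).trans (H _ _ hη)
    simp only [Complex.ofReal_re, Complex.ofReal_im]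
    ring

theorem stmt1 (a b c : ℂ) :
    ∃ a' b' c' : ℝ,
      supBidisk (a' : ℂ) (b' : ℂ) (c' : ℂ) ≤ supBidisk a b c ∧
      (|a'| ^ ((4:ℝ)/3) + |b'| ^ ((4:ℝ)/3) + |c'| ^ ((4:ℝ)/3)) ^ ((3:ℝ)/4)
        = (‖a‖ ^ ((4:ℝ)/3) + ‖b‖ ^ ((4:ℝ)/3)
            + ‖c‖ ^ ((4:ℝ)/3)) ^ ((3:ℝ)/4) := by
  obtain ⟨β, hβ, hβS⟩ := exists_norm_eq_forall_norm_le_supBidisk a b c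
  have hS := supBidisk_nonneg a b c
  have H : ∀ x y : ℝ, x ^ 2 + y ^ 2 = 1 →
      ((‖a‖ + ‖c‖) * x + β.re) ^ 2 + ((‖a‖ - ‖c‖) * y + β.im) ^ 2 ≤ supBidisk a b c ^ 2 :=
    fun x y hxy => by
      rw [← norm_sq_ofReal_mul_add_add_ofReal_mul_conj ‖a‖ ‖c‖ ⟨x, y⟩,
        pow_le_pow_iff_left₀ (norm_nonneg _) hS two_ne_zero]
      exact hβS _ (norm_eq_one_iff_re_sq_add_im_sq.2 hxy)
  have hβb : |β.re| ^ 2 + β.im ^ 2 = ‖b‖ ^ 2 := by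
    rw [sq_abs, ← hβ, Complex.sq_norm, Complex.normSq_apply, sq, sq]
  by_cases hsum : ‖a‖ + ‖c‖ + ‖b‖ ≤ supBidisk a b c
  · refine ⟨‖a‖, ‖b‖, ‖c‖, ?_, by simp⟩
    refine (supBidisk_le_norm_add_norm_add_norm _ _ _).trans ?_
    simp only [Complex.norm_real, norm_norm]
    linarith
  · refine ⟨‖a‖, ‖b‖, -‖c‖, supBidisk_ofReal_neg_le hS fun x y hxy => ?_, by simp⟩
    exact sq_add_sq_le_of_forall_sq_add_sq_le (by positivity) (abs_nonneg _) (norm_nonneg b) hβb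
      (fun _ _ => sq_add_sq_le_abs_of_forall H) (by nlinarith) hxy
end

section
/- There exist a, b, c ∈ ℂ with sup_{|z|,|w|≤1} |az² + bzw + cw²| = 1 and (|a|^{4/3} + |b|^{4/3} + |c|^{4/3})^{3/4} = (3/2)^{1/4}; in particular one may take the extremal polynomial with a = (√3)/6, c = −(√3)/6, and b = √(4·(1/12)·(1/(((√3)/3)²) − 1)). -/
open Complex ComplexConjugate

theorem normSq_quadratic_eq {s b : ℝ} (h : 4 * s ^ 2 + b ^ 2 = 1) (z w : ℂ) :
    normSq (s * z ^ 2 + b * z * w + -s * w ^ 2) =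
      ((normSq z + normSq w) / 2) ^ 2 -
        (2 * s * (z * conj w).re - b * (normSq z - normSq w) / 2) ^ 2 := by
  simp only [normSq_apply, add_re, add_im, mul_re, mul_im, neg_re, neg_im, ofReal_re, ofReal_im,
    conj_re, conj_im, sq]
  linear_combination ((z.re * z.re + z.im * z.im + (w.re * w.re + w.im * w.im)) ^ 2 / 4) * h

theorem norm_quadratic_le_one {s b : ℝ} (h : 4 * s ^ 2 + b ^ 2 = 1) {z w : ℂ}
    (hz : ‖z‖ ≤ 1) (hw : ‖w‖ ≤ 1) :
    ‖s * z ^ 2 + b * z * w + -s * w ^ 2‖ ≤ 1 := by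
  have hz2 : normSq z ≤ 1 := by rw [normSq_eq_norm_sq]; exact pow_le_one₀ (norm_nonneg z) hz
  have hw2 : normSq w ≤ 1 := by rw [normSq_eq_norm_sq]; exact pow_le_one₀ (norm_nonneg w) hw
  rw [← sq_le_one_iff₀ (norm_nonneg _), ← normSq_eq_norm_sq, normSq_quadratic_eq h]
  nlinarith [normSq_nonneg z, normSq_nonneg w]

theorem norm_quadratic_I_one {s b : ℝ} (h : 4 * s ^ 2 + b ^ 2 = 1) :
    ‖s * I ^ 2 + b * I * 1 + -s * 1 ^ 2‖ = 1 := by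
  rw [← pow_eq_one_iff_of_nonneg (norm_nonneg _) two_ne_zero, ← normSq_eq_norm_sq,
    normSq_quadratic_eq h]
  simp

theorem supBidisk_eq_one {s b : ℝ} (h : 4 * s ^ 2 + b ^ 2 = 1) :
    supBidisk s b (-s) = 1 := by
  refine IsGreatest.csSup_eq ⟨⟨I, 1, by simp, by simp, (norm_quadratic_I_one h).symm⟩, ?_⟩
  rintro r ⟨z, w, hz, hw, rfl⟩
  exact norm_quadratic_le_one h hz hw

theorem rpow_four_thirds_pow_three {x : ℝ} (hx : 0 ≤ x) :
    (x ^ ((4 : ℝ) / 3)) ^ 3 = (x ^ 2) ^ 2 := by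
  rw [← Real.rpow_mul_natCast hx, ← pow_mul]
  norm_num

theorem sum_rpow_four_thirds_eq {x y : ℝ} (hx : 0 ≤ x) (hy : 0 ≤ y)
    (hx2 : x ^ 2 = 1 / 12) (hy2 : y ^ 2 = 2 / 3) :
    (x ^ ((4 : ℝ) / 3) + y ^ ((4 : ℝ) / 3) + x ^ ((4 : ℝ) / 3)) ^ ((3 : ℝ) / 4) =
      ((3 : ℝ) / 2) ^ ((1 : ℝ) / 4) := by
  set u := x ^ ((4 : ℝ) / 3)
  set v := y ^ ((4 : ℝ) / 3)
  have hu3 : u ^ 3 = 1 / 144 := by rw [rpow_four_thirds_pow_three hx, hx2]; norm_num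
  have hv3 : v ^ 3 = 4 / 9 := by rw [rpow_four_thirds_pow_three hy, hy2]; norm_num
  have hv : v = 4 * u := by
    rw [← pow_left_inj₀ (by positivity) (by positivity) three_ne_zero, mul_pow, hu3, hv3]
    norm_num
  have hsum : (u + v + u) ^ 3 = 3 / 2 := by rw [hv]; linear_combination 216 * hu3
  calc (u + v + u) ^ ((3 : ℝ) / 4) = ((u + v + u) ^ 3) ^ ((1 : ℝ) / 4) := by
        rw [← Real.rpow_natCast_mul (by positivity)]; norm_num
    _ = ((3 : ℝ) / 2) ^ ((1 : ℝ) / 4) := by rw [hsum]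

theorem stmt5 :
    ∃ a b c : ℂ,
      a = ((Real.sqrt 3 / 6 : ℝ) : ℂ) ∧
      c = ((-(Real.sqrt 3) / 6 : ℝ) : ℂ) ∧
      b = ((Real.sqrt (4 * (1/12) * (1 / ((Real.sqrt 3 / 3)^2) - 1)) : ℝ) : ℂ) ∧
      supBidisk a b c = 1 ∧
      (‖a‖ ^ ((4:ℝ)/3) + ‖b‖ ^ ((4:ℝ)/3)
        + ‖c‖ ^ ((4:ℝ)/3)) ^ ((3:ℝ)/4) = ((3:ℝ)/2) ^ ((1:ℝ)/4) := by
  set s : ℝ := Real.sqrt 3 / 6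
  set b : ℝ := Real.sqrt (4 * (1/12) * (1 / ((Real.sqrt 3 / 3)^2) - 1))
  have hs0 : 0 ≤ s := by positivity
  have hb0 : 0 ≤ b := Real.sqrt_nonneg _
  have h3 : Real.sqrt 3 ^ 2 = 3 := Real.sq_sqrt (by norm_num)
  have hs2 : s ^ 2 = 1 / 12 := by rw [div_pow, h3]; norm_num
  have hb2 : b ^ 2 = 2 / 3 := by
    rw [Real.sq_sqrt] <;> rw [div_pow, h3] <;> norm_num
  have hc : ((-(Real.sqrt 3) / 6 : ℝ) : ℂ) = -(s : ℂ) := by simp only [s]; push_cast; ring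
  refine ⟨s, b, _, rfl, rfl, rfl, ?_, ?_⟩
  · rw [hc]
    exact supBidisk_eq_one (by rw [hs2, hb2]; norm_num)
  · rw [hc, norm_neg, norm_real, Real.norm_of_nonneg hs0, norm_real, Real.norm_of_nonneg hb0]
    exact sum_rpow_four_thirds_eq hs0 hb0 hs2 hb2
end

section
/- For every t ∈ [1/2, 1], the 2-homogeneous polynomial P(x,y) = t x² − t y² + 2√(t(1−t)) xy satisfies sup_{|x|,|y|≤1} |P(x,y)| = 1. -/
/-!
With `s = √(t(1-t))` we have `s² + t² = t`, so completing the square in either variable gives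
`P(x, y) = x² - (t y - s x)² / t = (t x + s y)² / t - y²`. Hence `-y² ≤ P ≤ x²`, so `|P| ≤ 1` on the
square, and `P(1, s/t) = 1`; the point `(1, s/t)` lies in the square exactly because `t ≥ 1/2`.
-/

/-- Supremum of `|a x² + b x y + c y²|` over the unit square `[-1,1]²`. -/
noncomputable def supSquare (a b c : ℝ) : ℝ :=
  sSup {r : ℝ | ∃ x y : ℝ, |x| ≤ 1 ∧ |y| ≤ 1 ∧ r = |a * x^2 + b * x * y + c * y^2|}

theorem supSquare_eq {a b c m : ℝ}
    (hle : ∀ x y : ℝ, |x| ≤ 1 → |y| ≤ 1 → |a * x^2 + b * x * y + c * y^2| ≤ m)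
    (hattain : ∃ x y : ℝ, |x| ≤ 1 ∧ |y| ≤ 1 ∧ |a * x^2 + b * x * y + c * y^2| = m) :
    supSquare a b c = m := by
  obtain ⟨x, y, hx, hy, hm⟩ := hattain
  refine IsGreatest.csSup_eq ⟨⟨x, y, hx, hy, hm.symm⟩, ?_⟩
  rintro r ⟨x, y, hx, hy, rfl⟩
  exact hle x y hx hy

section RotatedForm

variable {s t : ℝ}

theorem rotatedForm_eq_sq_sub_div (hs : s ^ 2 = t * (1 - t)) (ht : t ≠ 0) (x y : ℝ) :
    t * x^2 + 2 * s * x * y + (-t) * y^2 = x^2 - (t * y - s * x)^2 / t := by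
  field_simp
  linear_combination x ^ 2 * hs

theorem rotatedForm_eq_div_sub_sq (hs : s ^ 2 = t * (1 - t)) (ht : t ≠ 0) (x y : ℝ) :
    t * x^2 + 2 * s * x * y + (-t) * y^2 = (t * x + s * y)^2 / t - y^2 := by
  field_simp
  linear_combination -y ^ 2 * hs

theorem abs_rotatedForm_le_one (hs : s ^ 2 = t * (1 - t)) (ht : 0 < t)
    {x y : ℝ} (hx : |x| ≤ 1) (hy : |y| ≤ 1) :
    |t * x^2 + 2 * s * x * y + (-t) * y^2| ≤ 1 := by
  have hx2 : x ^ 2 ≤ 1 := (sq_le_one_iff_abs_le_one x).2 hx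
  have hy2 : y ^ 2 ≤ 1 := (sq_le_one_iff_abs_le_one y).2 hy
  refine abs_le.2 ⟨?_, ?_⟩
  · rw [rotatedForm_eq_div_sub_sq hs ht.ne']
    have : 0 ≤ (t * x + s * y)^2 / t := by positivity
    linarith
  · rw [rotatedForm_eq_sq_sub_div hs ht.ne']
    have : 0 ≤ (t * y - s * x)^2 / t := by positivity
    linarith

theorem rotatedForm_one_div (hs : s ^ 2 = t * (1 - t)) (ht : t ≠ 0) :
    t * 1^2 + 2 * s * 1 * (s / t) + (-t) * (s / t)^2 = 1 := by
  rw [rotatedForm_eq_sq_sub_div hs ht, mul_div_cancel₀ s ht]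
  ring

end RotatedForm

theorem stmt6 (t : ℝ) (ht : t ∈ Set.Icc (1/2 : ℝ) 1) :
    supSquare t (2 * Real.sqrt (t * (1 - t))) (-t) = 1 := by
  obtain ⟨ht_half, ht_one⟩ := ht
  have ht0 : 0 < t := by linarith
  set s := Real.sqrt (t * (1 - t))
  have hs : s ^ 2 = t * (1 - t) := Real.sq_sqrt (by nlinarith)
  have hst : s ≤ t := Real.sqrt_le_iff.2 ⟨ht0.le, by nlinarith⟩
  refine supSquare_eq (fun x y hx hy => abs_rotatedForm_le_one hs ht0 hx hy)
    ⟨1, s / t, by simp, ?_, by rw [rotatedForm_one_div hs ht0.ne', abs_one]⟩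
  rw [abs_of_nonneg (by positivity)]
  exact (div_le_one ht0).2 hst
end

section
/- The function f(t) = (2 t^{4/3} + (2√(t(1−t)))^{4/3})^{3/4} on [1/2, 1] attains its maximum at the unique point t₀ = (1/36)(2·(107 + 9√129)^{1/3} + (856 − 72√129)^{1/3} + 16), and f(t₀) ∈ (1.8373, 1.8374). -/
noncomputable def f (t : ℝ) : ℝ :=
  (2 * t ^ ((4:ℝ)/3) + (2 * Real.sqrt (t * (1 - t))) ^ ((4:ℝ)/3)) ^ ((3:ℝ)/4)

noncomputable def t₀ : ℝ :=
  (1/36) * (2 * (107 + 9 * Real.sqrt 129) ^ ((1:ℝ)/3)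
      + (856 - 72 * Real.sqrt 129) ^ ((1:ℝ)/3) + 16)

/-!
Maximise `g = f ^ (4/3) = 2 t ^ (4/3) + (4 t (1 - t)) ^ (2/3)` instead of `f`. With
`c = t ^ (1/3)` and `w = (4 t (1 - t)) ^ (1/3)` one has `g' = 8/3 · (c w - (2t - 1)) / w`, and
comparing cubes, `(c w)³ - (2t - 1)³ = -(12t³ - 16t² + 6t - 1)`. By Cardano, `t₀` is the only
real root of this cubic, so `g` increases on `[1/2, t₀]` and decreases on `[t₀, 1]`.
At the critical point `c w = 2t₀ - 1`, which turns `g(t₀)` into the rational expression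
`g(t₀)³ t₀² = (6t₀² - 4t₀ + 1)³`; the cubic pins `t₀` down to `(0.86783, 0.86784)`, enough
for the numerical bounds.
-/

open Real Set

lemma rpow_pow_of_mul_eq {x p q : ℝ} {n : ℕ} (hx : 0 ≤ x) (h : p * n = q) :
    (x ^ p) ^ n = x ^ q := by
  rw [← rpow_mul_natCast hx, h]

lemma t₀_cubic : 12 * t₀ ^ 3 - 16 * t₀ ^ 2 + 6 * t₀ - 1 = 0 := by
  have h129 : √129 ^ 2 = 129 := sq_sqrt (by norm_num)
  have hsqrt : √129 < 107 / 9 := by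
    rw [sqrt_lt' (by norm_num)]; norm_num
  have hx : (0:ℝ) ≤ 107 + 9 * √129 := by positivity
  have hy : (0:ℝ) ≤ 856 - 72 * √129 := by linarith
  set a := (107 + 9 * √129) ^ ((1:ℝ)/3)
  set b := (856 - 72 * √129) ^ ((1:ℝ)/3)
  have ha : a ^ 3 = 107 + 9 * √129 := by
    rw [rpow_pow_of_mul_eq hx (q := 1) (by norm_num), rpow_one]
  have hb : b ^ 3 = 856 - 72 * √129 := by
    rw [rpow_pow_of_mul_eq hy (q := 1) (by norm_num), rpow_one]
  have hab : a * b = 20 := by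
    refine (Odd.pow_inj (n := 3) (by decide)).1 ?_
    rw [mul_pow, ha, hb]; linear_combination (-648) * h129
  have ht₀ : t₀ = (2 * a + b + 16) / 36 := by unfold t₀; ring
  rw [ht₀]
  linear_combination (8 * ha + hb + 6 * (2 * a + b) * hab) / 3888

lemma t₀_bounds : 0.86783 < t₀ ∧ t₀ < 0.86784 := by
  have := t₀_cubic
  constructor
  · nlinarith [sq_nonneg (t₀ - 0.4), sq_nonneg (t₀ - 0.86783)]
  · nlinarith [sq_nonneg (t₀ - 0.4), sq_nonneg (t₀ - 0.86784)]

lemma t₀_mem_Icc : t₀ ∈ Icc (1 / 2) 1 :=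
  ⟨by linarith [t₀_bounds.1], by linarith [t₀_bounds.2]⟩

lemma cubic_eq_mul_sub_t₀ (t : ℝ) : 12 * t ^ 3 - 16 * t ^ 2 + 6 * t - 1
    = (t - t₀) * (12 * (t ^ 2 + t * t₀ + t₀ ^ 2) - 16 * (t + t₀) + 6) := by
  linear_combination t₀_cubic

lemma cubic_neg_of_lt {t : ℝ} (h₁ : 1 / 2 ≤ t) (h₂ : t < t₀) :
    12 * t ^ 3 - 16 * t ^ 2 + 6 * t - 1 < 0 := by
  obtain ⟨hl, hu⟩ := t₀_bounds
  rw [cubic_eq_mul_sub_t₀]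
  refine mul_neg_of_neg_of_pos (by linarith) ?_
  nlinarith [mul_nonneg (sub_nonneg.2 h₁) (sub_nonneg.2 h₁)]

lemma cubic_pos_of_gt {t : ℝ} (h : t₀ < t) : 0 < 12 * t ^ 3 - 16 * t ^ 2 + 6 * t - 1 := by
  obtain ⟨hl, hu⟩ := t₀_bounds
  rw [cubic_eq_mul_sub_t₀]
  refine mul_pos (by linarith) ?_
  nlinarith

noncomputable def g (t : ℝ) : ℝ := 2 * t ^ ((4:ℝ)/3) + (4 * (t * (1 - t))) ^ ((2:ℝ)/3)

lemma f_eq_g_rpow {t : ℝ} (ht : t ∈ Icc 0 1) : f t = g t ^ ((3:ℝ)/4) := by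
  have ht' : 0 ≤ t * (1 - t) := mul_nonneg ht.1 (sub_nonneg.2 ht.2)
  have hs : (0:ℝ) ≤ 2 * √(t * (1 - t)) := by positivity
  have : (2 * √(t * (1 - t))) ^ ((4:ℝ)/3) = (4 * (t * (1 - t))) ^ ((2:ℝ)/3) := by
    rw [show (4:ℝ)/3 = 2 * (2/3) by norm_num, rpow_mul hs, rpow_two, mul_pow, sq_sqrt ht']
    norm_num
  rw [f, g, this]

lemma g_nonneg {t : ℝ} (ht : t ∈ Icc 0 1) : 0 ≤ g t := by
  have := ht.1
  have : 0 ≤ t * (1 - t) := mul_nonneg ht.1 (sub_nonneg.2 ht.2)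
  unfold g; positivity

lemma continuous_g : Continuous g := by
  unfold g
  fun_prop (disch := norm_num)

lemma hasDerivAt_g {t : ℝ} (ht : t ∈ Ioo 0 1) :
    HasDerivAt g (8 / 3 * (t ^ ((1:ℝ)/3) * (4 * (t * (1 - t))) ^ ((1:ℝ)/3) - (2 * t - 1))
      / (4 * (t * (1 - t))) ^ ((1:ℝ)/3)) t := by
  obtain ⟨h0, h1⟩ := ht
  have hu : 0 < 4 * (t * (1 - t)) := by have := mul_pos h0 (sub_pos.2 h1); positivity
  have hpow := (hasDerivAt_rpow_const (p := (4:ℝ)/3) (Or.inl h0.ne')).const_mul 2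
  have hpoly : HasDerivAt (fun t : ℝ => 4 * (t * (1 - t))) (4 * (1 - 2 * t)) t :=
    (((hasDerivAt_id' t).mul ((hasDerivAt_id' t).const_sub 1)).const_mul 4).congr_deriv (by ring)
  refine (hpow.add (hpoly.rpow_const (p := (2:ℝ)/3) (Or.inl hu.ne'))).congr_deriv ?_
  rw [show (4:ℝ)/3 - 1 = 1/3 by norm_num, show (2:ℝ)/3 - 1 = -(1/3) by norm_num, rpow_neg hu.le]
  field_simp
  ring

lemma cube_cbrt_mul_sub_cube {t : ℝ} (ht : t ∈ Icc 0 1) :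
    (t ^ ((1:ℝ)/3) * (4 * (t * (1 - t))) ^ ((1:ℝ)/3)) ^ 3 - (2 * t - 1) ^ 3
      = -(12 * t ^ 3 - 16 * t ^ 2 + 6 * t - 1) := by
  have ht' : 0 ≤ t * (1 - t) := mul_nonneg ht.1 (sub_nonneg.2 ht.2)
  rw [mul_pow, rpow_pow_of_mul_eq ht.1 (q := 1) (by norm_num),
    rpow_pow_of_mul_eq (by positivity) (q := 1) (by norm_num), rpow_one, rpow_one]
  ring

lemma strictMonoOn_g : StrictMonoOn g (Icc (1 / 2) t₀) := by
  refine strictMonoOn_of_deriv_pos (convex_Icc _ _) continuous_g.continuousOn fun t ht => ?_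
  rw [interior_Icc] at ht
  have ht' : t ∈ Ioo 0 1 := ⟨by linarith [ht.1], by linarith [ht.2, t₀_bounds.2]⟩
  have hu : 0 < 4 * (t * (1 - t)) := by have := mul_pos ht'.1 (sub_pos.2 ht'.2); positivity
  have hcube := cube_cbrt_mul_sub_cube (Ioo_subset_Icc_self ht')
  have hlt : 2 * t - 1 < t ^ ((1:ℝ)/3) * (4 * (t * (1 - t))) ^ ((1:ℝ)/3) :=
    (Odd.pow_lt_pow (n := 3) (by decide)).1 (by linarith [cubic_neg_of_lt ht.1.le ht.2])
  rw [(hasDerivAt_g ht').deriv]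
  exact div_pos (mul_pos (by norm_num) (sub_pos.2 hlt)) (rpow_pos_of_pos hu _)

lemma strictAntiOn_g : StrictAntiOn g (Icc t₀ 1) := by
  refine strictAntiOn_of_deriv_neg (convex_Icc _ _) continuous_g.continuousOn fun t ht => ?_
  rw [interior_Icc] at ht
  have ht' : t ∈ Ioo 0 1 := ⟨by linarith [ht.1, t₀_bounds.1], ht.2⟩
  have hu : 0 < 4 * (t * (1 - t)) := by have := mul_pos ht'.1 (sub_pos.2 ht'.2); positivity
  have hcube := cube_cbrt_mul_sub_cube (Ioo_subset_Icc_self ht')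
  have hlt : t ^ ((1:ℝ)/3) * (4 * (t * (1 - t))) ^ ((1:ℝ)/3) < 2 * t - 1 :=
    (Odd.pow_lt_pow (n := 3) (by decide)).1 (by linarith [cubic_pos_of_gt ht.1])
  rw [(hasDerivAt_g ht').deriv]
  exact div_neg_of_neg_of_pos (mul_neg_of_pos_of_neg (by norm_num) (sub_neg.2 hlt))
    (rpow_pos_of_pos hu _)

lemma g_lt_g_t₀ {t : ℝ} (ht : t ∈ Icc (1 / 2) 1) (hne : t ≠ t₀) : g t < g t₀ := by
  rcases hne.lt_or_gt with h | h
  · exact strictMonoOn_g ⟨ht.1, h.le⟩ ⟨t₀_mem_Icc.1, le_rfl⟩ h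
  · exact strictAntiOn_g ⟨le_rfl, t₀_mem_Icc.2⟩ ⟨h.le, ht.2⟩ h

lemma f_lt_f_t₀ {t : ℝ} (ht : t ∈ Icc (1 / 2) 1) (hne : t ≠ t₀) : f t < f t₀ := by
  have hsub : Icc (1 / 2 : ℝ) 1 ⊆ Icc 0 1 := Icc_subset_Icc_left (by norm_num)
  rw [f_eq_g_rpow (hsub ht), f_eq_g_rpow (hsub t₀_mem_Icc)]
  exact rpow_lt_rpow (g_nonneg (hsub ht)) (g_lt_g_t₀ ht hne) (by norm_num)

lemma g_t₀_pow_three_mul_sq : g t₀ ^ 3 * t₀ ^ 2 = (6 * t₀ ^ 2 - 4 * t₀ + 1) ^ 3 := by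
  have ht₀ : t₀ ∈ Icc 0 1 := ⟨by linarith [t₀_mem_Icc.1], t₀_mem_Icc.2⟩
  have hu : 0 ≤ 4 * (t₀ * (1 - t₀)) := by
    have := mul_nonneg ht₀.1 (sub_nonneg.2 ht₀.2); positivity
  set c := t₀ ^ ((1:ℝ)/3)
  set w := (4 * (t₀ * (1 - t₀))) ^ ((1:ℝ)/3)
  have hcw : c * w = 2 * t₀ - 1 :=
    (Odd.pow_inj (n := 3) (by decide)).1 (by linarith [cube_cbrt_mul_sub_cube ht₀, t₀_cubic])
  have hc : c ^ 3 = t₀ := by rw [rpow_pow_of_mul_eq ht₀.1 (q := 1) (by norm_num), rpow_one]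
  have hg : g t₀ = 2 * c ^ 4 + w ^ 2 := by
    rw [g, ← rpow_pow_of_mul_eq ht₀.1 (p := 1/3) (n := 4) (by norm_num),
      ← rpow_pow_of_mul_eq hu (p := 1/3) (n := 2) (by norm_num)]
  have hgc : g t₀ * c ^ 2 = 6 * t₀ ^ 2 - 4 * t₀ + 1 := by
    rw [hg]; linear_combination 2 * (c ^ 3 + t₀) * hc + (c * w + 2 * t₀ - 1) * hcw
  calc g t₀ ^ 3 * t₀ ^ 2 = (g t₀ * c ^ 2) ^ 3 := by
        linear_combination (-g t₀ ^ 3 * (c ^ 3 + t₀)) * hc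
    _ = _ := by rw [hgc]

lemma f_t₀_mem_Ioo : f t₀ ∈ Ioo 1.8373 1.8374 := by
  have ht₀ : t₀ ∈ Icc 0 1 := ⟨by linarith [t₀_mem_Icc.1], t₀_mem_Icc.2⟩
  have hf0 : 0 ≤ f t₀ := by rw [f_eq_g_rpow ht₀]; exact rpow_nonneg (g_nonneg ht₀) _
  have hf : f t₀ ^ 4 * t₀ ^ 2 = (6 * t₀ ^ 2 - 4 * t₀ + 1) ^ 3 := by
    rw [f_eq_g_rpow ht₀, rpow_pow_of_mul_eq (g_nonneg ht₀) (q := 3) (by norm_num)]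
    exact_mod_cast g_t₀_pow_three_mul_sq
  obtain ⟨hl, hu⟩ := t₀_bounds
  have hq_lo : 6 * 0.86783 ^ 2 - 4 * 0.86783 + 1 ≤ 6 * t₀ ^ 2 - 4 * t₀ + 1 := by nlinarith
  have hq_hi : 6 * t₀ ^ 2 - 4 * t₀ + 1 ≤ 6 * 0.86784 ^ 2 - 4 * 0.86784 + 1 := by nlinarith
  have hq : 0 ≤ 6 * 0.86783 ^ 2 - 4 * 0.86783 + (1:ℝ) := by norm_num
  constructor
  · refine lt_of_pow_lt_pow_left₀ 4 hf0 (lt_of_mul_lt_mul_right ?_ (sq_nonneg t₀))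
    calc 1.8373 ^ 4 * t₀ ^ 2 < 1.8373 ^ 4 * 0.86784 ^ 2 := by gcongr
      _ < (6 * 0.86783 ^ 2 - 4 * 0.86783 + 1) ^ 3 := by norm_num
      _ ≤ (6 * t₀ ^ 2 - 4 * t₀ + 1) ^ 3 := pow_le_pow_left₀ hq hq_lo 3
      _ = f t₀ ^ 4 * t₀ ^ 2 := hf.symm
  · refine lt_of_pow_lt_pow_left₀ 4 (by norm_num) (lt_of_mul_lt_mul_right ?_ (sq_nonneg t₀))
    calc f t₀ ^ 4 * t₀ ^ 2 = (6 * t₀ ^ 2 - 4 * t₀ + 1) ^ 3 := hf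
      _ ≤ (6 * 0.86784 ^ 2 - 4 * 0.86784 + 1) ^ 3 := pow_le_pow_left₀ (hq.trans hq_lo) hq_hi 3
      _ < 1.8374 ^ 4 * 0.86783 ^ 2 := by norm_num
      _ < 1.8374 ^ 4 * t₀ ^ 2 := by gcongr

theorem stmt7 :
    t₀ ∈ Set.Icc (1/2 : ℝ) 1 ∧
    (∀ t ∈ Set.Icc (1/2 : ℝ) 1, f t ≤ f t₀) ∧
    (∀ t ∈ Set.Icc (1/2 : ℝ) 1, f t = f t₀ → t = t₀) ∧
    f t₀ ∈ Set.Ioo (1.8373 : ℝ) 1.8374 := by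
  refine ⟨t₀_mem_Icc, fun t ht => ?_, fun t ht h => ?_, f_t₀_mem_Ioo⟩
  · rcases eq_or_ne t t₀ with rfl | hne
    exacts [le_rfl, (f_lt_f_t₀ ht hne).le]
  · by_contra hne
    exact (f_lt_f_t₀ ht hne).ne h
end

section
/- The optimal constant D such that (|a|^{4/3} + |b|^{4/3} + |c|^{4/3})^{3/4} ≤ D · sup_{(x,y)∈[−1,1]²} |ax² + bxy + cy²| for all a, b, c ∈ ℝ equals max_{t∈[1/2,1]} (2 t^{4/3} + (2√(t(1−t)))^{4/3})^{3/4}, which lies in the interval (1.8373, 1.8374). -/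
open Real Set

section supSquare

variable {a b c x y M : ℝ}

lemma bddAbove_supSquare_set (a b c : ℝ) :
    BddAbove {r : ℝ | ∃ x y : ℝ, |x| ≤ 1 ∧ |y| ≤ 1 ∧ r = |a * x^2 + b * x * y + c * y^2|} := by
  refine ⟨|a| + |b| + |c|, ?_⟩
  rintro r ⟨x, y, hx, hy, rfl⟩
  have hx2 : |x| ^ 2 ≤ 1 := pow_le_one₀ (abs_nonneg x) hx
  have hy2 : |y| ^ 2 ≤ 1 := pow_le_one₀ (abs_nonneg y) hy
  have hxy : |x| * |y| ≤ 1 := mul_le_one₀ hx (abs_nonneg y) hy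
  calc |a * x^2 + b * x * y + c * y^2| ≤ |a * x^2| + |b * x * y| + |c * y^2| := abs_add_three _ _ _
    _ = |a| * |x| ^ 2 + |b| * (|x| * |y|) + |c| * |y| ^ 2 := by simp only [abs_mul, abs_pow, mul_assoc]
    _ ≤ |a| * 1 + |b| * 1 + |c| * 1 := by gcongr
    _ = |a| + |b| + |c| := by ring

lemma abs_le_supSquare (a b c : ℝ) (hx : |x| ≤ 1) (hy : |y| ≤ 1) :
    |a * x^2 + b * x * y + c * y^2| ≤ supSquare a b c :=
  le_csSup (bddAbove_supSquare_set a b c) ⟨x, y, hx, hy, rfl⟩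

lemma abs_left_le_supSquare (a b c : ℝ) : |a| ≤ supSquare a b c := by
  simpa using abs_le_supSquare a b c (x := 1) (y := 0) (by simp) (by simp)

lemma abs_right_le_supSquare (a b c : ℝ) : |c| ≤ supSquare a b c := by
  simpa using abs_le_supSquare a b c (x := 0) (y := 1) (by simp) (by simp)

lemma abs_add_add_le_supSquare (a b c : ℝ) : |a + b + c| ≤ supSquare a b c := by
  simpa using abs_le_supSquare a b c (x := 1) (y := 1) (by simp) (by simp)

lemma supSquare_nonneg (a b c : ℝ) : 0 ≤ supSquare a b c :=
  (abs_nonneg a).trans (abs_left_le_supSquare a b c)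

lemma supSquare_le (h : ∀ x y : ℝ, |x| ≤ 1 → |y| ≤ 1 → |a * x^2 + b * x * y + c * y^2| ≤ M) :
    supSquare a b c ≤ M :=
  csSup_le ⟨_, 0, 0, by simp, by simp, rfl⟩ fun _ ⟨x, y, hx, hy, hr⟩ => hr ▸ h x y hx hy

lemma supSquare_swap_le (a b c : ℝ) : supSquare c b a ≤ supSquare a b c :=
  supSquare_le fun x y hx hy => by
    convert abs_le_supSquare a b c hy hx using 2; ring

lemma supSquare_neg_middle_le (a b c : ℝ) : supSquare a (-b) c ≤ supSquare a b c :=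
  supSquare_le fun x y hx hy => by
    convert abs_le_supSquare a b c (abs_neg x ▸ hx) hy using 2; ring

lemma supSquare_neg_le (a b c : ℝ) : supSquare (-a) (-b) (-c) ≤ supSquare a b c :=
  supSquare_le fun x y hx hy => by
    rw [← abs_neg]
    convert abs_le_supSquare a b c hx hy using 2; ring

lemma supSquare_mul_le {k : ℝ} (hk : 0 ≤ k) (a b c : ℝ) :
    supSquare (k * a) (k * b) (k * c) ≤ k * supSquare a b c :=
  supSquare_le fun x y hx hy => by
    rw [show k * a * x^2 + k * b * x * y + k * c * y^2 = k * (a * x^2 + b * x * y + c * y^2) by ring,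
      abs_mul, abs_of_nonneg hk]
    exact mul_le_mul_of_nonneg_left (abs_le_supSquare a b c hx hy) hk

lemma eq_zero_of_supSquare_eq_zero (h : supSquare a b c = 0) : a = 0 ∧ b = 0 ∧ c = 0 := by
  have ha := abs_nonpos_iff.mp (h ▸ abs_left_le_supSquare a b c)
  have hc := abs_nonpos_iff.mp (h ▸ abs_right_le_supSquare a b c)
  have habc := abs_nonpos_iff.mp (h ▸ abs_add_add_le_supSquare a b c)
  exact ⟨ha, by linarith, hc⟩

end supSquare

section extremal

variable {a b c : ℝ}

lemma le_two_sqrt_of_supSquare_le_one (hca : |c| ≤ a) (hc : c < 0) (hb : 0 ≤ b)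
    (hbc : b ≤ -2 * c) (hN : supSquare a b c ≤ 1) : b ≤ 2 * √(a * (1 - a)) := by
  -- `y = b / (-2c)` maximises `b y + c y²`
  have hy : |b / (-2 * c)| ≤ 1 := by
    rw [abs_of_nonneg (div_nonneg hb (by linarith)), div_le_one (by linarith)]
    exact hbc
  have hval : a * 1^2 + b * 1 * (b / (-2 * c)) + c * (b / (-2 * c))^2 = a + b^2 / (-4 * c) := by
    field_simp
    ring
  have hpeak := (abs_le.mp ((abs_le_supSquare a b c (le_of_eq abs_one) hy).trans hN)).2
  rw [hval] at hpeak
  have hb2 : b^2 ≤ (1 - a) * (-4 * c) := (div_le_iff₀ (by linarith)).mp (by linarith)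
  have ha : -c ≤ a := (neg_le_abs c).trans hca
  have h1a : 0 ≤ 1 - a := by nlinarith [sq_nonneg b]
  have hhalf : b / 2 ≤ √(a * (1 - a)) := (le_sqrt (by positivity) (by nlinarith)).mpr (by nlinarith)
  linarith

lemma exists_sum_rpow_le_of_nonneg (ha : 0 ≤ a) (hb : 0 ≤ b) (hca : |c| ≤ a)
    (hN : supSquare a b c ≤ 1) :
    ∃ t ∈ Icc (1/2 : ℝ) 1, |a| ^ ((4:ℝ)/3) + |b| ^ ((4:ℝ)/3) + |c| ^ ((4:ℝ)/3)
      ≤ 2 * t ^ ((4:ℝ)/3) + (2 * √(t * (1 - t))) ^ ((4:ℝ)/3) := by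
  have ha1 : a ≤ 1 := (le_abs_self a).trans ((abs_left_le_supSquare a b c).trans hN)
  have hsum : a + b + c ≤ 1 := (le_abs_self _).trans ((abs_add_add_le_supSquare a b c).trans hN)
  have hac : 0 ≤ a + c := by linarith [neg_le_abs c]
  rw [abs_of_nonneg ha, abs_of_nonneg hb]
  by_cases hard : c < 0 ∧ b ≤ -2 * c ∧ 1/2 ≤ a
  · obtain ⟨hc, hbc, ha2⟩ := hard
    refine ⟨a, ⟨ha2, ha1⟩, ?_⟩
    have hc' : |c| ^ ((4:ℝ)/3) ≤ a ^ ((4:ℝ)/3) := rpow_le_rpow (abs_nonneg c) hca (by norm_num)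
    have hb' : b ^ ((4:ℝ)/3) ≤ (2 * √(a * (1 - a))) ^ ((4:ℝ)/3) :=
      rpow_le_rpow hb (le_two_sqrt_of_supSquare_le_one hca hc hb hbc hN) (by norm_num)
    linarith
  · refine ⟨1, ⟨by norm_num, le_rfl⟩, ?_⟩
    have hsum' : a + b + |c| ≤ 2 := by
      rcases le_or_gt 0 c with hc | hc
      · rw [abs_of_nonneg hc]; linarith
      · rw [abs_of_neg hc]
        by_cases hbc : b ≤ -2 * c
        · have : a < 1/2 := not_le.mp fun h => hard ⟨hc, hbc, h⟩
          linarith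
        · linarith
    have hp : (1:ℝ) ≤ 4/3 := by norm_num
    calc a ^ ((4:ℝ)/3) + b ^ ((4:ℝ)/3) + |c| ^ ((4:ℝ)/3) ≤ a + b + |c| := by
          gcongr
          · exact rpow_le_self_of_le_one ha ha1 hp
          · exact rpow_le_self_of_le_one hb (by linarith) hp
          · exact rpow_le_self_of_le_one (abs_nonneg c) (hca.trans ha1) hp
      _ ≤ 2 * 1 ^ ((4:ℝ)/3) + (2 * √(1 * (1 - 1))) ^ ((4:ℝ)/3) := by norm_num [hsum']

lemma exists_sum_rpow_le_of_supSquare_le_one (hN : supSquare a b c ≤ 1) :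
    ∃ t ∈ Icc (1/2 : ℝ) 1, |a| ^ ((4:ℝ)/3) + |b| ^ ((4:ℝ)/3) + |c| ^ ((4:ℝ)/3)
      ≤ 2 * t ^ ((4:ℝ)/3) + (2 * √(t * (1 - t))) ^ ((4:ℝ)/3) := by
  wlog hca : |c| ≤ |a| generalizing a c
  · obtain ⟨t, ht, h⟩ := this ((supSquare_swap_le a b c).trans hN) (le_of_not_ge hca)
    exact ⟨t, ht, by linarith⟩
  wlog ha : 0 ≤ a generalizing a b c
  · obtain ⟨t, ht, h⟩ := this ((supSquare_neg_le a b c).trans hN) (by simpa using hca)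
      (by linarith)
    exact ⟨t, ht, by simpa using h⟩
  wlog hb : 0 ≤ b generalizing b
  · obtain ⟨t, ht, h⟩ := this ((supSquare_neg_middle_le a b c).trans hN) (by linarith)
    exact ⟨t, ht, by simpa using h⟩
  exact exists_sum_rpow_le_of_nonneg ha hb (abs_of_nonneg ha ▸ hca) hN

end extremal

section numerics

variable {x q s t : ℝ}

lemma le_rpow_natCast_div_iff {m n : ℕ} (hx : 0 ≤ x) (hq : 0 ≤ q) (hn : n ≠ 0) :
    q ≤ x ^ ((m : ℝ) / n) ↔ q ^ n ≤ x ^ m := by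
  rw [← pow_le_pow_iff_left₀ hq (rpow_nonneg hx _) hn, ← rpow_natCast (x ^ _), ← rpow_mul hx,
    div_mul_cancel₀ _ (Nat.cast_ne_zero.mpr hn), rpow_natCast]

lemma rpow_natCast_div_le_iff {m n : ℕ} (hx : 0 ≤ x) (hq : 0 ≤ q) (hn : n ≠ 0) :
    x ^ ((m : ℝ) / n) ≤ q ↔ x ^ m ≤ q ^ n := by
  rw [← pow_le_pow_iff_left₀ (rpow_nonneg hx _) hq hn, ← rpow_natCast (x ^ _), ← rpow_mul hx,
    div_mul_cancel₀ _ (Nat.cast_ne_zero.mpr hn), rpow_natCast]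

lemma two_mul_sqrt_rpow_four_thirds (hx : 0 ≤ x) :
    (2 * √x) ^ ((4:ℝ)/3) = (4 * x) ^ ((2:ℝ)/3) := by
  rw [show (4:ℝ)/3 = 2 * (2/3) by norm_num, rpow_mul (by positivity), rpow_two, mul_pow,
    sq_sqrt hx]
  norm_num

lemma three_mul_sq_mul_rpow_one_third_le (hx : 0 ≤ x) (hs : 0 ≤ s) :
    3 * s ^ 2 * x ^ ((1:ℝ)/3) ≤ x + 2 * s ^ 3 := by
  have h := geom_mean_le_arith_mean2_weighted (w₁ := 1/3) (w₂ := 2/3) (by norm_num) (by norm_num)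
    hx (pow_nonneg hs 3) (by norm_num)
  rw [← rpow_natCast s 3, ← rpow_mul hs] at h
  norm_num at h
  linarith

lemma three_mul_mul_rpow_two_thirds_le (hx : 0 ≤ x) (hs : 0 ≤ s) :
    3 * s * x ^ ((2:ℝ)/3) ≤ 2 * x + s ^ 3 := by
  have h := geom_mean_le_arith_mean2_weighted (w₁ := 2/3) (w₂ := 1/3) (by norm_num) (by norm_num)
    hx (pow_nonneg hs 3) (by norm_num)
  rw [← rpow_natCast s 3, ← rpow_mul hs] at h
  norm_num at h
  linarith

lemma f_eq (ht : t ∈ Icc (0:ℝ) 1) :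
    f t = (2 * t ^ ((4:ℝ)/3) + (4 * (t * (1 - t))) ^ ((2:ℝ)/3)) ^ ((3:ℝ)/4) := by
  rw [f, two_mul_sqrt_rpow_four_thirds (mul_nonneg ht.1 (sub_nonneg.mpr ht.2))]

lemma f_le_of_mem_Icc (ht : t ∈ Icc (0:ℝ) 1) : f t ≤ 1.83739 := by
  obtain ⟨ht0, ht1⟩ := ht
  have hw : 0 ≤ 4 * (t * (1 - t)) := by nlinarith
  -- tangent bounds for the cube roots at the maximiser `t ≈ 0.8678`
  have h1 := mul_le_mul_of_nonneg_left (three_mul_sq_mul_rpow_one_third_le ht0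
    (show (0:ℝ) ≤ 477/500 by norm_num)) ht0
  have h2 := three_mul_mul_rpow_two_thirds_le hw (show (0:ℝ) ≤ 771/1000 by norm_num)
  have hinner : 2 * t ^ ((4:ℝ)/3) + (4 * (t * (1 - t))) ^ ((2:ℝ)/3) ≤ 2.25043 := by
    rw [show (4:ℝ)/3 = 1 + 1/3 by norm_num, rpow_add' ht0 (by norm_num), rpow_one]
    nlinarith [sq_nonneg (t - 867637/1000000)]
  rw [f_eq ⟨ht0, ht1⟩, show (3:ℝ)/4 = ((3:ℕ):ℝ) / (4:ℕ) by norm_num,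
    rpow_natCast_div_le_iff (by positivity) (by norm_num) (by norm_num)]
  calc _ ≤ (2.25043 : ℝ) ^ 3 := pow_le_pow_left₀ (by positivity) hinner 3
    _ ≤ 1.83739 ^ 4 := by norm_num

lemma le_f_217_div_250 : 1.83731 ≤ f (217/250) := by
  have h1 : (82799/100000 : ℝ) ≤ (217/250) ^ ((4:ℝ)/3) := by
    rw [show (4:ℝ)/3 = ((4:ℕ):ℝ) / (3:ℕ) by norm_num,
      le_rpow_natCast_div_iff (by norm_num) (by norm_num) (by norm_num)]
    norm_num
  have h2 : (59443/100000 : ℝ) ≤ (4 * (217/250 * (1 - 217/250))) ^ ((2:ℝ)/3) := by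
    rw [show (2:ℝ)/3 = ((2:ℕ):ℝ) / (3:ℕ) by norm_num,
      le_rpow_natCast_div_iff (by norm_num) (by norm_num) (by norm_num)]
    norm_num
  rw [f_eq (by norm_num), show (3:ℝ)/4 = ((3:ℕ):ℝ) / (4:ℕ) by norm_num,
    le_rpow_natCast_div_iff (by positivity) (by norm_num) (by norm_num)]
  calc (1.83731 : ℝ) ^ 4 ≤ 2.2504 ^ 3 := by norm_num
    _ ≤ _ := pow_le_pow_left₀ (by norm_num) (by linarith) 3

end numerics

lemma bddAbove_f_image : BddAbove (f '' Icc (1/2 : ℝ) 1) :=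
  ⟨1.83739, by rintro _ ⟨t, ht, rfl⟩; exact f_le_of_mem_Icc ⟨by linarith [ht.1], ht.2⟩⟩

lemma sSup_f_image_mem_Ioo : sSup (f '' Icc (1/2 : ℝ) 1) ∈ Ioo (1.8373 : ℝ) 1.8374 :=
  ⟨(by norm_num : (1.8373 : ℝ) < 1.83731).trans_le
      (le_f_217_div_250.trans (le_csSup bddAbove_f_image ⟨217/250, by norm_num, rfl⟩)),
    (csSup_le ((nonempty_Icc.mpr (by norm_num : (1/2 : ℝ) ≤ 1)).image f) fun _ ⟨t, ht, h⟩ =>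
      h ▸ f_le_of_mem_Icc ⟨by linarith [ht.1], ht.2⟩).trans_lt (by norm_num)⟩

section constant

variable {a b c : ℝ}

lemma sum_abs_rpow_rpow_mul {k : ℝ} (hk : 0 ≤ k) (a b c : ℝ) :
    (|k * a| ^ ((4:ℝ)/3) + |k * b| ^ ((4:ℝ)/3) + |k * c| ^ ((4:ℝ)/3)) ^ ((3:ℝ)/4)
      = k * (|a| ^ ((4:ℝ)/3) + |b| ^ ((4:ℝ)/3) + |c| ^ ((4:ℝ)/3)) ^ ((3:ℝ)/4) := by
  simp only [abs_mul, abs_of_nonneg hk, mul_rpow hk (abs_nonneg _)]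
  rw [← mul_add, ← mul_add, mul_rpow (rpow_nonneg hk _) (by positivity), ← rpow_mul hk]
  norm_num

lemma sum_abs_rpow_le_sSup_of_supSquare_le_one (hN : supSquare a b c ≤ 1) :
    (|a| ^ ((4:ℝ)/3) + |b| ^ ((4:ℝ)/3) + |c| ^ ((4:ℝ)/3)) ^ ((3:ℝ)/4)
      ≤ sSup (f '' Icc (1/2 : ℝ) 1) := by
  obtain ⟨t, ht, h⟩ := exists_sum_rpow_le_of_supSquare_le_one hN
  calc _ ≤ f t := rpow_le_rpow (by positivity) h (by norm_num)
    _ ≤ _ := le_csSup bddAbove_f_image ⟨t, ht, rfl⟩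

lemma sum_abs_rpow_le_sSup_mul_supSquare (a b c : ℝ) :
    (|a| ^ ((4:ℝ)/3) + |b| ^ ((4:ℝ)/3) + |c| ^ ((4:ℝ)/3)) ^ ((3:ℝ)/4)
      ≤ sSup (f '' Icc (1/2 : ℝ) 1) * supSquare a b c := by
  rcases (supSquare_nonneg a b c).eq_or_lt with hN | hN
  · obtain ⟨rfl, rfl, rfl⟩ := eq_zero_of_supSquare_eq_zero hN.symm
    rw [← hN]
    norm_num
  · have hscaled := sum_abs_rpow_le_sSup_of_supSquare_le_one
      ((supSquare_mul_le (inv_nonneg.mpr hN.le) a b c).trans (inv_mul_cancel₀ hN.ne').le)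
    rw [sum_abs_rpow_rpow_mul (inv_nonneg.mpr hN.le), inv_mul_le_iff₀ hN] at hscaled
    linarith

lemma supSquare_le_one_of_sq_add_sq {s t : ℝ} (ht : 0 < t) (hst : s ^ 2 + t ^ 2 = t) :
    supSquare t (2 * s) (-t) ≤ 1 :=
  supSquare_le fun x y hx hy => by
    have hx2 : x ^ 2 ≤ 1 := (sq_le_one_iff_abs_le_one x).mpr hx
    have hy2 : y ^ 2 ≤ 1 := (sq_le_one_iff_abs_le_one y).mpr hy
    -- `t² + s² = t` makes `t` times the form a difference of squares in two ways
    have hlow : t * (t * x^2 + 2 * s * x * y + -t * y^2) = (t * x + s * y)^2 - t * y^2 := by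
      linear_combination (-y^2) * hst
    have hup : t * (t * x^2 + 2 * s * x * y + -t * y^2) = t * x^2 - (s * x - t * y)^2 := by
      linear_combination x^2 * hst
    rw [abs_le]
    constructor <;> nlinarith [sq_nonneg (t * x + s * y), sq_nonneg (s * x - t * y)]

lemma sSup_le_of_forall_sum_abs_rpow_le {D : ℝ}
    (hD : ∀ a b c : ℝ, (|a| ^ ((4:ℝ)/3) + |b| ^ ((4:ℝ)/3) + |c| ^ ((4:ℝ)/3)) ^ ((3:ℝ)/4)
      ≤ D * supSquare a b c) :
    sSup (f '' Icc (1/2 : ℝ) 1) ≤ D := by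
  have hD0 : 0 ≤ D := by
    have h := hD 1 0 0
    norm_num at h
    nlinarith [supSquare_nonneg 1 0 0]
  refine csSup_le ((nonempty_Icc.mpr (by norm_num : (1/2 : ℝ) ≤ 1)).image f) ?_
  rintro _ ⟨t, ⟨ht1, ht2⟩, rfl⟩
  have ht0 : 0 < t := by linarith
  have hN := supSquare_le_one_of_sq_add_sq ht0 (s := √(t * (1 - t)))
    (by rw [sq_sqrt (by nlinarith)]; ring)
  have h := hD t (2 * √(t * (1 - t))) (-t)
  rw [abs_neg, abs_of_pos ht0, abs_of_nonneg (by positivity)] at h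
  calc f t = (t ^ ((4:ℝ)/3) + (2 * √(t * (1 - t))) ^ ((4:ℝ)/3) + t ^ ((4:ℝ)/3)) ^ ((3:ℝ)/4) := by
        rw [f]; ring_nf
    _ ≤ D * supSquare t (2 * √(t * (1 - t))) (-t) := h
    _ ≤ D := mul_le_of_le_one_right hD0 hN

end constant

theorem stmt8 :
    IsLeast {D : ℝ | ∀ a b c : ℝ,
        (|a| ^ ((4:ℝ)/3) + |b| ^ ((4:ℝ)/3) + |c| ^ ((4:ℝ)/3)) ^ ((3:ℝ)/4)
          ≤ D * supSquare a b c}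
      (sSup (f '' Set.Icc (1/2 : ℝ) 1)) ∧
    sSup (f '' Set.Icc (1/2 : ℝ) 1) ∈ Set.Ioo (1.8373 : ℝ) 1.8374 :=
  ⟨⟨sum_abs_rpow_le_sSup_mul_supSquare, fun _ => sSup_le_of_forall_sum_abs_rpow_le⟩,
    sSup_f_image_mem_Ioo⟩
end

section
/- For −2 ≤ λ ≤ −(2√5)/3, with x₀ = √((−3λ − √(9λ²−20))/10) and x₁ = √((−3λ + √(9λ²−20))/10), one has |q_λ(x₀)| ≥ |q_λ(x₁)| where q_λ(x) = x⁵ + λx³ + x. -/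
/-! At a critical point the quintic `x⁵ + l x³ + x` collapses, via `5x⁴ + 3l x² + 1 = 0`, to
`x (2l x² + 4) / 5`. Comparing the squares of these values at the two critical points `x₀ ≤ x₁`
and eliminating `x₀², x₁²` by Vieta's formulas (sum `-3l/5`, product `1/5`) leaves the sign of
`(x₀² - x₁²) (9l² - 20) (l² - 5)`, which is nonnegative for `20/9 ≤ l² ≤ 5`. -/

lemma quintic_eq_of_deriv_eq_zero {l x : ℝ} (h : 5 * (x ^ 2) ^ 2 + 3 * l * x ^ 2 + 1 = 0) :
    x ^ 5 + l * x ^ 3 + x = x * (2 * l * x ^ 2 + 4) / 5 := by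
  linear_combination (x / 5) * h

lemma mul_sq_le_mul_sq_of_vieta {l t₀ t₁ : ℝ} (hle : t₀ ≤ t₁) (hsum : t₀ + t₁ = -(3 * l) / 5)
    (hprod : t₀ * t₁ = 1 / 5) (hl : 20 ≤ 9 * l ^ 2) (hl' : l ^ 2 ≤ 5) :
    t₁ * (2 * l * t₁ + 4) ^ 2 ≤ t₀ * (2 * l * t₀ + 4) ^ 2 := by
  have key : t₀ * (2 * l * t₀ + 4) ^ 2 - t₁ * (2 * l * t₁ + 4) ^ 2
      = 4 * (t₀ - t₁) * (l ^ 2 * ((t₀ + t₁) ^ 2 - t₀ * t₁) + 4 * l * (t₀ + t₁) + 4) := by ring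
  have bracket : l ^ 2 * ((-(3 * l) / 5) ^ 2 - 1 / 5) + 4 * l * (-(3 * l) / 5) + 4
      = (9 * l ^ 2 - 20) * (l ^ 2 - 5) / 25 := by ring
  rw [hsum, hprod, bracket] at key
  have hsign : 0 ≤ (t₀ - t₁) * ((9 * l ^ 2 - 20) * (l ^ 2 - 5)) :=
    mul_nonneg_of_nonpos_of_nonpos (by linarith)
      (mul_nonpos_of_nonneg_of_nonpos (by linarith) (by linarith))
  linarith

theorem stmt15 (l : ℝ) (h1 : -2 ≤ l) (h2 : l ≤ -(2 * Real.sqrt 5) / 3) :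
    let x₀ := Real.sqrt ((-(3*l) - Real.sqrt (9*l^2 - 20)) / 10)
    let x₁ := Real.sqrt ((-(3*l) + Real.sqrt (9*l^2 - 20)) / 10)
    |x₁^5 + l * x₁^3 + x₁| ≤ |x₀^5 + l * x₀^3 + x₀| := by
  intro x₀ x₁
  have h5 : Real.sqrt 5 ^ 2 = 5 := Real.sq_sqrt (by norm_num)
  have hl : 20 ≤ 9 * l ^ 2 := by nlinarith [Real.sqrt_nonneg 5]
  have hl' : l ^ 2 ≤ 5 := by nlinarith [Real.sqrt_nonneg 5]
  set s := Real.sqrt (9 * l ^ 2 - 20)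
  have hs : s ^ 2 = 9 * l ^ 2 - 20 := Real.sq_sqrt (by linarith)
  have hs0 : 0 ≤ s := Real.sqrt_nonneg _
  have hl0 : l < 0 := by nlinarith [Real.sqrt_nonneg 5]
  have hs_le : s ≤ -(3 * l) := by nlinarith
  have hx₀ : x₀ ^ 2 = (-(3 * l) - s) / 10 := Real.sq_sqrt (by linarith)
  have hx₁ : x₁ ^ 2 = (-(3 * l) + s) / 10 := Real.sq_sqrt (by linarith)
  have hsum : x₀ ^ 2 + x₁ ^ 2 = -(3 * l) / 5 := by rw [hx₀, hx₁]; ring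
  have hprod : x₀ ^ 2 * x₁ ^ 2 = 1 / 5 := by rw [hx₀, hx₁]; linear_combination -hs / 100
  rw [quintic_eq_of_deriv_eq_zero (x := x₀) (by linear_combination 5 * x₀ ^ 2 * hsum - 5 * hprod),
    quintic_eq_of_deriv_eq_zero (x := x₁) (by linear_combination 5 * x₁ ^ 2 * hsum - 5 * hprod),
    ← sq_le_sq, div_pow, div_pow, mul_pow, mul_pow]
  gcongr ?_ / _
  exact mul_sq_le_mul_sq_of_vieta (by rw [hx₀, hx₁]; linarith) hsum hprod hl hl'
end

section
/- If λ ≤ −(2√5)/3 then sup_{(x,y)∈[−1,1]²} |x⁵y + λx³y³ + xy⁵| = max{|2 + λ|, |q_λ(x₀)|}, where x₀ = √((−3λ − √(9λ²−20))/10) and q_λ(x) = x⁵ + λx³ + x; if λ > −(2√5)/3 the sup norm equals |2 + λ|. -/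
/-- Supremum of `|x⁵y + λx³y³ + xy⁵|` over the unit square `[-1,1]²`. -/
noncomputable def supQ (l : ℝ) : ℝ :=
  sSup {r : ℝ | ∃ x y : ℝ, |x| ≤ 1 ∧ |y| ≤ 1 ∧
    r = |x^5 * y + l * x^3 * y^3 + x * y^5|}

/-!
`Q x y = x⁶ q(y/x)` is symmetric in `x, y` and `q` is odd, so the sup norm of `Q` on the square
is the maximum of `|q|` on `[0, 1]`. There `q ≥ -|2 + λ|` always. The critical points of `q` are
the `t > 0` with `5t⁴ + 3λt² + 1 = 0`; when `λ > -2√5/3` there are none and `q ≤ q 1 = 2 + λ`.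
Otherwise they are `a ≤ b` with `ab = 1/√5`: `q ≤ q a` on `[0, b]` and `q ≤ q 1` on `[b, 1]`,
each shown by a polynomial identity modulo the critical equation for `a`.
-/

def Q (l x y : ℝ) : ℝ := x^5 * y + l * x^3 * y^3 + x * y^5

def q (l t : ℝ) : ℝ := t^5 + l * t^3 + t

section Reduction

variable {l : ℝ}

lemma Q_comm (x y : ℝ) : Q l x y = Q l y x := by
  unfold Q; ring

lemma Q_one_right (t : ℝ) : Q l t 1 = q l t := by
  unfold Q q; ring

lemma Q_eq_pow_six_mul_q {x : ℝ} (hx : x ≠ 0) (y : ℝ) : Q l x y = x^6 * q l (y / x) := by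
  unfold Q q; field_simp; ring

lemma abs_q_abs (t : ℝ) : |q l (|t|)| = |q l t| := by
  rcases abs_choice t with h | h <;> rw [h]
  rw [show q l (-t) = -q l t by unfold q; ring, abs_neg]

variable {M : ℝ}

lemma abs_Q_le_of_abs_le (hM : ∀ t ∈ Set.Icc (0 : ℝ) 1, |q l t| ≤ M) {x y : ℝ}
    (hx : |x| ≤ 1) (hyx : |y| ≤ |x|) : |Q l x y| ≤ M := by
  rcases eq_or_ne x 0 with rfl | hx0
  · simpa [Q, q] using hM 0 (by simp)
  have hw : |y / x| ≤ 1 := by rwa [abs_div, div_le_one (abs_pos.2 hx0)]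
  calc |Q l x y| = |x|^6 * |q l (|y / x|)| := by
        rw [Q_eq_pow_six_mul_q hx0, abs_mul, abs_pow, abs_q_abs]
    _ ≤ 1 * M := by
      gcongr
      · exact pow_le_one₀ (abs_nonneg x) hx
      · exact hM _ ⟨abs_nonneg _, hw⟩
    _ = M := one_mul M

lemma abs_Q_le (hM : ∀ t ∈ Set.Icc (0 : ℝ) 1, |q l t| ≤ M) {x y : ℝ} (hx : |x| ≤ 1)
    (hy : |y| ≤ 1) : |Q l x y| ≤ M := by
  rcases le_total |y| |x| with h | h
  · exact abs_Q_le_of_abs_le hM hx h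
  · rw [Q_comm]; exact abs_Q_le_of_abs_le hM hy h

lemma supQ_eq (hM : ∀ t ∈ Set.Icc (0 : ℝ) 1, |q l t| ≤ M) {t₀ : ℝ}
    (ht₀ : t₀ ∈ Set.Icc (0 : ℝ) 1) (hmax : |q l t₀| = M) : supQ l = M := by
  refine IsGreatest.csSup_eq ⟨⟨t₀, 1, ?_, le_of_eq abs_one, ?_⟩, ?_⟩
  · rw [abs_of_nonneg ht₀.1]; exact ht₀.2
  · rw [← hmax, ← Q_one_right]; rfl
  · rintro r ⟨x, y, hx, hy, rfl⟩
    exact abs_Q_le hM hx hy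

end Reduction

section Bounds

variable {l t : ℝ}

lemma q_nonneg (hl : -2 ≤ l) (ht : 0 ≤ t) : 0 ≤ q l t := by
  unfold q
  nlinarith [mul_nonneg ht (sq_nonneg (t^2 - 1)),
    mul_nonneg (pow_nonneg ht 3) (neg_le_iff_add_nonneg.1 hl)]

lemma q_one (l : ℝ) : q l 1 = 2 + l := by
  unfold q; ring

lemma two_add_sub_q (l t : ℝ) :
    2 + l - q l t = (1 - t) * (t^4 + t^3 + t^2 + t + 2 + l * (t^2 + t + 1)) := by
  unfold q; ring

lemma two_add_le_q (hl : l ≤ -2) (ht0 : 0 ≤ t) (ht1 : t ≤ 1) : 2 + l ≤ q l t := by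
  have : t^4 + t^3 + t^2 + t + 2 + l * (t^2 + t + 1) ≤ 0 := by
    nlinarith [mul_nonneg (mul_nonneg ht0 (sub_nonneg.2 ht1)) (sq_nonneg (t + 1)),
      mul_nonneg (by linarith : (0:ℝ) ≤ -2 - l) (by positivity : (0:ℝ) ≤ t^2 + t + 1)]
  nlinarith [two_add_sub_q l t, mul_nonpos_of_nonneg_of_nonpos (sub_nonneg.2 ht1) this]

lemma neg_abs_two_add_le_q (ht0 : 0 ≤ t) (ht1 : t ≤ 1) : -|2 + l| ≤ q l t := by
  rcases le_total (-2) l with hl | hl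
  · exact (neg_nonpos.2 (abs_nonneg _)).trans (q_nonneg hl ht0)
  · rw [abs_of_nonpos (by linarith), neg_neg]
    exact two_add_le_q hl ht0 ht1

lemma q_le_two_add (hl : -(2 * Real.sqrt 5) / 3 ≤ l) (ht0 : 0 ≤ t) (ht1 : t ≤ 1) :
    q l t ≤ 2 + l := by
  have hs5 : Real.sqrt 5 ^ 2 = 5 := Real.sq_sqrt (by norm_num)
  have : 0 ≤ t^4 + t^3 + t^2 + t + 2 + l * (t^2 + t + 1) := by
    nlinarith [mul_nonneg (by linarith : (0:ℝ) ≤ l + 2 * Real.sqrt 5 / 3)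
        (by positivity : (0:ℝ) ≤ t^2 + t + 1),
      mul_nonneg ht0 (sq_nonneg (t - 1/2)), sq_nonneg (t^2 - 1/2),
      mul_nonneg (mul_nonneg ht0 ht0) (sq_nonneg (t - 1)), mul_nonneg (pow_nonneg ht0 2) ht0]
  nlinarith [two_add_sub_q l t, mul_nonneg (sub_nonneg.2 ht1) this]

lemma abs_q_le_abs_two_add (hl : -(2 * Real.sqrt 5) / 3 ≤ l) (ht0 : 0 ≤ t) (ht1 : t ≤ 1) :
    |q l t| ≤ |2 + l| :=
  abs_le.2 ⟨neg_abs_two_add_le_q ht0 ht1, (q_le_two_add hl ht0 ht1).trans (le_abs_self _)⟩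

end Bounds

section CriticalPoint

variable {l a t : ℝ}

lemma q_le_q_of_isCritical (ha : 0 < a) (hcrit : 5 * a^4 + 3 * l * a^2 + 1 = 0)
    (ha4 : 5 * a^4 ≤ 1) (ht : 0 ≤ t) (htb : 5 * a^2 * t^2 ≤ 1) : q l t ≤ q l a := by
  have hP : 0 ≤ -3 * a^2 * t^3 - 6 * a^3 * t^2 + (1 - 4 * a^4) * t + 2 * a * (1 - a^4) := by
    nlinarith [mul_nonneg ht (sub_nonneg.2 htb), mul_nonneg ha.le (sub_nonneg.2 ha4),
      mul_nonneg (mul_nonneg ha.le ht) (sub_nonneg.2 htb),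
      mul_nonneg (mul_nonneg ht ht) (sub_nonneg.2 ha4),
      mul_nonneg (sq_nonneg (a - t)) ha.le, mul_nonneg (sq_nonneg (a - t)) ht]
  have hid : 3 * a^2 * (q l a - q l t) =
      (t - a)^2 * (-3 * a^2 * t^3 - 6 * a^3 * t^2 + (1 - 4 * a^4) * t + 2 * a * (1 - a^4)) := by
    unfold q; linear_combination (a^3 - t^3) * hcrit
  rw [← sub_nonneg, ← mul_nonneg_iff_of_pos_left (by positivity : (0:ℝ) < 3 * a^2), hid]
  exact mul_nonneg (sq_nonneg _) hP

lemma q_le_two_add_of_isCritical (ha : 0 < a) (hcrit : 5 * a^4 + 3 * l * a^2 + 1 = 0)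
    (ha4 : 5 * a^4 ≤ 1) (ht0 : 0 ≤ t) (ht1 : t ≤ 1) (htb : 1 ≤ 5 * a^2 * t^2) :
    q l t ≤ 2 + l := by
  have hR : 0 ≤ 3 * a^2 * t^4 + 3 * a^2 * t^3 + (3 * a^2 - 5 * a^4 - 1) * (t^2 + t)
      + 6 * a^2 - 5 * a^4 - 1 := by
    nlinarith [mul_nonneg (sub_nonneg.2 ht1) (sub_nonneg.2 htb),
      mul_nonneg (sub_nonneg.2 ha4) (sub_nonneg.2 ht1),
      mul_nonneg (mul_nonneg ht0 (sub_nonneg.2 ht1)) (sub_nonneg.2 htb),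
      mul_nonneg ht0 (sub_nonneg.2 htb), sq_nonneg (1 - t),
      mul_nonneg (sq_nonneg (1 - t)) (sub_nonneg.2 ha4),
      mul_nonneg (sq_nonneg (1 - t)) (mul_pos ha ha).le,
      mul_pos ha ha, sq_nonneg (5 * a^2 - 1), mul_nonneg (sub_nonneg.2 ha4) ht0]
  have hid : 3 * a^2 * (2 + l - q l t) = (1 - t) * (3 * a^2 * t^4 + 3 * a^2 * t^3
      + (3 * a^2 - 5 * a^4 - 1) * (t^2 + t) + 6 * a^2 - 5 * a^4 - 1) := by
    unfold q; linear_combination (1 - t^3) * hcrit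
  rw [← sub_nonneg, ← mul_nonneg_iff_of_pos_left (by positivity : (0:ℝ) < 3 * a^2), hid]
  exact mul_nonneg (sub_nonneg.2 ht1) hR

lemma abs_q_le_max_of_isCritical (ha : 0 < a) (hcrit : 5 * a^4 + 3 * l * a^2 + 1 = 0)
    (ha4 : 5 * a^4 ≤ 1) (ht0 : 0 ≤ t) (ht1 : t ≤ 1) : |q l t| ≤ max |2 + l| |q l a| := by
  refine abs_le.2 ⟨(neg_le_neg (le_max_left _ _)).trans (neg_abs_two_add_le_q ht0 ht1), ?_⟩
  rcases le_total (5 * a^2 * t^2) 1 with htb | htb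
  · exact (q_le_q_of_isCritical ha hcrit ha4 ht0 htb).trans
      ((le_abs_self _).trans (le_max_right _ _))
  · exact (q_le_two_add_of_isCritical ha hcrit ha4 ht0 ht1 htb).trans
      ((le_abs_self _).trans (le_max_left _ _))

/-- The smaller positive root of `q' t = 5t⁴ + 3λt² + 1` when `λ ≤ -2√5/3` (junk otherwise). -/
noncomputable def criticalPoint (l : ℝ) : ℝ :=
  Real.sqrt ((-(3 * l) - Real.sqrt (9 * l^2 - 20)) / 10)

lemma sqrt_discr_lt (hl : l < 0) : Real.sqrt (9 * l^2 - 20) < -(3 * l) := by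
  rw [Real.sqrt_lt' (by linarith)]; linarith

lemma criticalPoint_sq (hl : l < 0) :
    criticalPoint l ^ 2 = (-(3 * l) - Real.sqrt (9 * l^2 - 20)) / 10 :=
  Real.sq_sqrt (by linarith [sqrt_discr_lt hl])

lemma criticalPoint_pos (hl : l < 0) : 0 < criticalPoint l :=
  Real.sqrt_pos.2 (by linarith [sqrt_discr_lt hl])

lemma criticalPoint_isCritical (hl : l < 0) (hd : 20 ≤ 9 * l^2) :
    5 * criticalPoint l ^ 4 + 3 * l * criticalPoint l ^ 2 + 1 = 0 := by
  have hs := Real.sq_sqrt (sub_nonneg.2 hd)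
  rw [show criticalPoint l ^ 4 = (criticalPoint l ^ 2)^2 by ring, criticalPoint_sq hl]
  linear_combination (1 / 20) * hs

-- Vieta: the two roots in `t²` have product `1/5`.
lemma five_mul_criticalPoint_pow_four_le_one (hl : l < 0) (hd : 20 ≤ 9 * l^2) :
    5 * criticalPoint l ^ 4 ≤ 1 := by
  have hs := Real.sq_sqrt (sub_nonneg.2 hd)
  have hs0 := Real.sqrt_nonneg (9 * l^2 - 20)
  rw [show criticalPoint l ^ 4 = (criticalPoint l ^ 2)^2 by ring, criticalPoint_sq hl]
  nlinarith [mul_nonneg hs0 (sub_nonneg.2 (sqrt_discr_lt hl).le)]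

end CriticalPoint

theorem stmt17 (l : ℝ) :
    (l ≤ -(2 * Real.sqrt 5) / 3 →
      supQ l = max |2 + l|
        |(Real.sqrt ((-(3*l) - Real.sqrt (9*l^2 - 20)) / 10))^5
          + l * (Real.sqrt ((-(3*l) - Real.sqrt (9*l^2 - 20)) / 10))^3
          + Real.sqrt ((-(3*l) - Real.sqrt (9*l^2 - 20)) / 10)|) ∧
    (l > -(2 * Real.sqrt 5) / 3 → supQ l = |2 + l|) := by
  refine ⟨fun hl => ?_, fun hl => ?_⟩
  · change supQ l = max |2 + l| |q l (criticalPoint l)|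
    have hs5 : Real.sqrt 5 ^ 2 = 5 := Real.sq_sqrt (by norm_num)
    have hl0 : l < 0 := by nlinarith [Real.sqrt_nonneg 5]
    have hd : 20 ≤ 9 * l^2 := by nlinarith [Real.sqrt_nonneg 5]
    have ha := criticalPoint_pos hl0
    have hcrit := criticalPoint_isCritical hl0 hd
    have ha4 := five_mul_criticalPoint_pow_four_le_one hl0 hd
    have ha1 : criticalPoint l ≤ 1 :=
      (pow_le_one_iff_of_nonneg ha.le (by norm_num : 4 ≠ 0)).1 (by linarith)
    have hM t (ht : t ∈ Set.Icc (0 : ℝ) 1) := abs_q_le_max_of_isCritical ha hcrit ha4 ht.1 ht.2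
    rcases max_choice |2 + l| |q l (criticalPoint l)| with h | h <;> rw [h] at hM ⊢
    · exact supQ_eq hM ⟨zero_le_one, le_rfl⟩ (by rw [q_one])
    · exact supQ_eq hM ⟨ha.le, ha1⟩ rfl
  · exact supQ_eq (fun t ht => abs_q_le_abs_two_add hl.le ht.1 ht.2) ⟨zero_le_one, le_rfl⟩
      (by rw [q_one])
end
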